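/- The fixed point u is K-power free: if v ∈ A* satisfies vᴺ ∈ L(u) for some N ≥ K, then v is the empty word, where K = ⌈λC² · max{2(g+1), (#A)²}⌉. -/

import Mathlib

/-!
Suppose `v ≠ []` and put `q = |v|`. For the least `p` with `|σ^p(a)| ≥ 2q` for every letter
`a`, each factor of `u` of length `2q` lies inside `σ^p(xy)` for a factor `xy` of length 2. As `xy`
recurs with gap `g`, that factor recurs in every window of length `(g + 1) max_a |σ^p(a)|`, and
the eigenvector `β` bounds this length by `2 λ C² (g + 1) q ≤ K q`. So every factor of length
`2q` already occurs inside the occurrence of `vᴺ`, which has period `q`; hence `u` itself has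
period `q`, contradicting aperiodicity.
-/

open List Filter

section Defs

variable {A : Type*}

/-- The segment `u_[i,j)` of the sequence `u`. -/
def seg (u : ℕ → A) (i j : ℕ) : List A :=
  (List.range (j - i)).map fun k => u (i + k)

/-- A substitution applied to a word, letter by letter. -/
def substWord (σ : A → List A) (w : List A) : List A := w.flatMap σ

/-- `σ^p` applied to a word. -/
def substPow (σ : A → List A) (p : ℕ) (w : List A) : List A := (substWord σ)^[p] w

/-- A substitution is primitive if some power of it sends every letter to a word
containing every letter. -/
def IsPrimitiveSubst (σ : A → List A) : Prop :=
  ∃ k : ℕ, ∀ a b : A, a ∈ substPow σ k [b]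

/-- `u` is a fixed point of `σ`: the image of every prefix of `u` is again a prefix of `u`. -/
def IsFixedPoint (σ : A → List A) (u : ℕ → A) : Prop :=
  ∀ m : ℕ, substWord σ (seg u 0 m) = seg u 0 (substWord σ (seg u 0 m)).length

/-- `u` is aperiodic under the left shift: `T^i u ≠ u` for all `i ≥ 1`. -/
def AperiodicSeq (u : ℕ → A) : Prop := ∀ i : ℕ, 1 ≤ i → (fun n => u (n + i)) ≠ u

/-- The set `E_p` of natural `p`-cutting points. -/
def cutPoints (σ : A → List A) (u : ℕ → A) (p : ℕ) : Set ℕ :=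
  { m | ∃ n : ℕ, m = (substPow σ p (seg u 0 n)).length }

/-- Unilateral recognizability of `σ` (with fixed point `u`). -/
def UnilaterallyRecognizable (σ : A → List A) (u : ℕ → A) : Prop :=
  ∃ L : ℕ, 1 ≤ L ∧ ∀ i j : ℕ,
    seg u i (i + L) = seg u j (j + L) → i ∈ cutPoints σ u 1 → j ∈ cutPoints σ u 1

/-- `L_n(u)`: the set of factors of `u` of length `n`. -/
def factors (u : ℕ → A) (n : ℕ) : Set (List A) := { w | ∃ i : ℕ, w = seg u i (i + n) }

/-- `L(u)`: the language of `u` (including the empty word). -/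
def lang (u : ℕ → A) : Set (List A) := { w | ∃ i n : ℕ, w = seg u i (i + n) }

/-- `w^n`: the concatenation of `n` copies of `w`. -/
def wpow (w : List A) (n : ℕ) : List A := (List.replicate n w).flatten

/-- A nonempty word `v` is primitive if `v = w^n` with `w` nonempty forces `w = v`. -/
def PrimitiveWord (v : List A) : Prop :=
  ∀ w : List A, w ≠ [] → ∀ n : ℕ, 1 ≤ n → v = wpow w n → w = v

/-- `g` is a gap of occurrences of `w` in `u` if every interval of length `g` in `ℤ₊`
contains an occurrence of `w`. -/
def IsGap (u : ℕ → A) (w : List A) (g : ℕ) : Prop := ∀ i : ℕ, w <:+: seg u i (i + g)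

/-- The minimal gap of a word. -/
noncomputable def minGap (u : ℕ → A) (w : List A) : ℕ := sInf { g | IsGap u w g }

/-- `g`: the maximum over `w ∈ L₂(u)` of the minimal gap of `w`. -/
noncomputable def gapConst (u : ℕ → A) : ℕ :=
  sSup { m | ∃ w ∈ factors u 2, m = minGap u w }

/-- A natural `p`-cutting `{α, σ^p(u_{i'}), …, σ^p(u_{i'+k-1}), β}` of `u_[i,i+ℓ)`. -/
def IsNaturalCutting (σ : A → List A) (u : ℕ → A) (p i ℓ : ℕ)
    (α : List A) (i' k : ℕ) (β : List A) : Prop :=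
  1 ≤ k ∧
  α <:+ substPow σ p [u (i' - 1)] ∧
  β <+: substPow σ p [u (i' + k)] ∧
  seg u i (i + ℓ) = α ++ substPow σ p (seg u i' (i' + k)) ++ β ∧
  i + α.length = (substPow σ p (seg u 0 i')).length

section Fin

variable [Fintype A] [Nonempty A] [DecidableEq A]

/-- The incidence matrix of a substitution: the `(a,b)` entry is `|σ(a)|_b`. -/
def incMatrix (σ : A → List A) : Matrix A A ℕ := Matrix.of fun a b => (σ a).count b

/-- The incidence matrix as a real matrix. -/
noncomputable def incMatrixR (σ : A → List A) : Matrix A A ℝ :=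
  Matrix.of fun a b => ((σ a).count b : ℝ)

/-- `S_p = max_{a ∈ A} |σ^p(a)|`. -/
def Sp (σ : A → List A) (p : ℕ) : ℕ :=
  Finset.univ.sup' Finset.univ_nonempty fun a => (substPow σ p [a]).length

/-- `I_p = min_{a ∈ A} |σ^p(a)|`. -/
def Ip (σ : A → List A) (p : ℕ) : ℕ :=
  Finset.univ.inf' Finset.univ_nonempty fun a => (substPow σ p [a]).length

/-- `C = ⌈(max_b β_b)/(min_b β_b)⌉` for a positive eigenvector `β`. -/
noncomputable def Cst (β : A → ℝ) : ℕ :=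
  ⌈(Finset.univ.sup' Finset.univ_nonempty β) / (Finset.univ.inf' Finset.univ_nonempty β)⌉₊

/-- `K = ⌈λ C² max{2(g+1), (#A)²}⌉`. -/
noncomputable def Kst (u : ℕ → A) (lam : ℝ) (β : A → ℝ) : ℕ :=
  ⌈lam * (Cst β : ℝ) ^ 2 *
    max (2 * ((gapConst u : ℝ) + 1)) ((Fintype.card A : ℝ) ^ 2)⌉₊

/-- The constant `p₀` of Lemma 4.2. -/
noncomputable def p0 (u : ℕ → A) (lam : ℝ) (β : A → ℝ) : ℕ :=
  (Kst u lam β) ^ 2 * ((Cst β) ^ 4 * (Kst u lam β + 1) + 2 * (Cst β) ^ 2 + 1) *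
    (∑ n ∈ Finset.Icc ((Cst β) ^ 2 * (Kst u lam β + 1) + 2)
        ((Kst u lam β + 1) * (Cst β) ^ 6 + 2 * (Cst β) ^ 4 + (Cst β) ^ 2 + 2), n) + 1

/-- The constant `L₀ = (C⁴(K+1)+2C²+1) S_{p₀}`. -/
noncomputable def L0 (σ : A → List A) (u : ℕ → A) (lam : ℝ) (β : A → ℝ) : ℕ :=
  ((Cst β) ^ 4 * (Kst u lam β + 1) + 2 * (Cst β) ^ 2 + 1) * Sp σ (p0 u lam β)

/-- The ℓ¹ norm of a vector. -/
def l1norm (f : A → ℝ) : ℝ := ∑ a, |f a|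

/-- The projective metric on positive row vectors. -/
noncomputable def projMetric (x y : A → ℝ) : ℝ :=
  Real.log ((Finset.univ.sup' Finset.univ_nonempty fun a => x a / y a) /
    (Finset.univ.inf' Finset.univ_nonempty fun a => x a / y a))

/-- The Birkhoff contraction coefficient of a matrix. -/
noncomputable def birkhoff (M : Matrix A A ℝ) : ℝ :=
  sSup { r | ∃ x y : A → ℝ, (∀ a, 0 < x a) ∧ (∀ a, 0 < y a) ∧
    LinearIndependent ℝ ![x, y] ∧
    r = projMetric (Matrix.vecMul x M) (Matrix.vecMul y M) / projMetric x y }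

end Fin

/-- Membership in the vertex set `V^*`: pairs `(xac, ybc)` of factors of `u` of length
`N + L₁ + 1` with `a ≠ b` and `|c| = L₁`. -/
def memVstar (u : ℕ → A) (N L₁ : ℕ) (p : List A × List A) : Prop :=
  ∃ (x y c : List A) (a b : A), a ≠ b ∧
    x.length = N ∧ y.length = N ∧ c.length = L₁ ∧
    p.1 = x ++ a :: c ∧ p.2 = y ++ b :: c ∧
    p.1 ∈ factors u (N + L₁ + 1) ∧ p.2 ∈ factors u (N + L₁ + 1)

/-- An edge between representatives: there is a word `w` with `s'w` a suffix of `σ(s)` and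
`t'w` a suffix of `σ(t)`. -/
def edgeRep (σ : A → List A) (p q : List A × List A) : Prop :=
  ∃ w : List A, w ≠ [] ∧ (q.1 ++ w) <:+ substWord σ p.1 ∧ (q.2 ++ w) <:+ substWord σ p.2

/-- An edge in the graph `G` between the unordered pairs represented by `p` and `q`. -/
def graphEdge (σ : A → List A) (p q : List A × List A) : Prop :=
  edgeRep σ p q ∨ edgeRep σ p q.swap ∨ edgeRep σ p.swap q ∨ edgeRep σ p.swap q.swap

/-- A representative generates a gap of natural 1-cutting points. -/
def genGapRep (σ : A → List A) (p : List A × List A) : Prop :=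
  ∃ (α β : A) (γ δ : List A),
    (σ α <:+ σ β ∧ σ α ≠ σ β) ∧
    List.Forall₂ (fun s t => σ s = σ t) γ δ ∧
    (α :: γ) <:+ substWord σ p.1 ∧ (β :: δ) <:+ substWord σ p.2

/-- The unordered pair represented by `p` generates a gap of natural 1-cutting points. -/
def genGap (σ : A → List A) (p : List A × List A) : Prop :=
  genGapRep σ p ∨ genGapRep σ p.swap

/-- The list of consecutive two-letter blocks of a word. -/
def pairsList (l : List A) : List (List A) :=
  List.zipWith (fun a b => [a, b]) l l.tail

end Defs

section Words

variable {A : Type*}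

theorem seg_length (u : ℕ → A) (i j : ℕ) : (seg u i j).length = j - i := by
  simp [seg]

theorem seg_singleton (u : ℕ → A) (i : ℕ) : seg u i (i + 1) = [u i] := by
  simp [seg]

theorem seg_append (u : ℕ → A) {i j k : ℕ} (hij : i ≤ j) (hjk : j ≤ k) :
    seg u i j ++ seg u j k = seg u i k := by
  rw [seg, seg, seg, show k - i = (j - i) + (k - j) by omega, List.range_add, List.map_append,
    List.map_map]
  congr 1
  exact List.map_congr_left fun x _ => by simp only [Function.comp]; congr 1; omega

theorem seg_infix_seg (u : ℕ → A) {i i' j' j : ℕ} (hi : i ≤ i') (hij : i' ≤ j')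
    (hj : j' ≤ j) :
    seg u i' j' <:+: seg u i j :=
  ⟨seg u i i', seg u j' j, by rw [List.append_assoc, seg_append u hij hj,
    seg_append u hi (hij.trans hj)]⟩

theorem length_wpow (v : List A) (N : ℕ) : (wpow v N).length = N * v.length := by
  simp [wpow]

theorem getElem?_wpow_add_length (v : List A) (N r : ℕ) (h : r + v.length < (wpow v N).length) :
    (wpow v N)[r + v.length]? = (wpow v N)[r]? := by
  cases N with
  | zero => simp [wpow] at h
  | succ N =>
    have hr : r < (wpow v N).length := by rw [length_wpow] at h ⊢; rw [Nat.succ_mul] at h; omega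
    calc (wpow v (N + 1))[r + v.length]? = (wpow v N)[r]? := by
          rw [show wpow v (N + 1) = v ++ wpow v N by simp [wpow, List.replicate_succ],
            List.getElem?_append_right (by omega), Nat.add_sub_cancel]
      _ = (wpow v (N + 1))[r]? := by
          rw [show wpow v (N + 1) = wpow v N ++ v by simp [wpow, List.replicate_succ'],
            List.getElem?_append_left hr]

theorem seg_add_length_eq_of_infix_wpow (u : ℕ → A) (j : ℕ) {v : List A} {N : ℕ}
    (h : seg u j (j + 2 * v.length) <:+: wpow v N) : u (j + v.length) = u j := by
  rcases Nat.eq_zero_or_pos v.length with hv | hv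
  · rw [hv, Nat.add_zero]
  obtain ⟨k, hk, hget⟩ := List.infix_iff_getElem?.mp h
  rw [seg_length] at hk
  have hfirst := hget 0 (by rw [seg_length]; omega)
  have hsecond := hget v.length (by rw [seg_length]; omega)
  rw [Nat.zero_add] at hfirst
  rw [Nat.add_comm, getElem?_wpow_add_length v N k (by omega), hfirst] at hsecond
  simpa [seg] using hsecond.symm

end Words

section Substitution

variable {A : Type*} (σ : A → List A)

theorem substPow_succ (p : ℕ) (w : List A) :
    substPow σ (p + 1) w = substWord σ (substPow σ p w) :=
  Function.iterate_succ_apply' _ _ _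

theorem substPow_add (p q : ℕ) (w : List A) :
    substPow σ (p + q) w = substPow σ p (substPow σ q w) :=
  Function.iterate_add_apply _ _ _ _

theorem substPow_append (p : ℕ) (w z : List A) :
    substPow σ p (w ++ z) = substPow σ p w ++ substPow σ p z := by
  induction p with
  | zero => rfl
  | succ p ih => simp [substPow_succ, ih, substWord]

theorem substPow_nil (p : ℕ) : substPow σ p ([] : List A) = [] := by
  induction p with
  | zero => rfl
  | succ p ih => rw [substPow_succ, ih]; rfl

theorem substPow_cons (p : ℕ) (a : A) (w : List A) :
    substPow σ p (a :: w) = substPow σ p [a] ++ substPow σ p w :=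
  substPow_append σ p [a] w

theorem substPow_infix (p : ℕ) {w z : List A} (h : w <:+: z) :
    substPow σ p w <:+: substPow σ p z := by
  obtain ⟨s, t, rfl⟩ := h
  exact ⟨substPow σ p s, substPow σ p t, by rw [substPow_append, substPow_append]⟩

theorem substPow_ne_nil (hσne : ∀ a, σ a ≠ []) (p : ℕ) (a : A) :
    substPow σ p [a] ≠ [] := by
  induction p with
  | zero => simp [substPow]
  | succ p ih =>
    obtain ⟨b, t, hbt⟩ := List.exists_cons_of_ne_nil ih
    simp [substPow_succ, hbt, substWord, hσne b]

end Substitution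

section CutPoints

variable {A : Type*}

/-- `cutPoints σ u p` is the range of `cutPoint σ u p`. -/
def cutPoint (σ : A → List A) (u : ℕ → A) (p n : ℕ) : ℕ :=
  (substPow σ p (seg u 0 n)).length

theorem cutPoint_succ (σ : A → List A) (u : ℕ → A) (p n : ℕ) :
    cutPoint σ u p (n + 1) = cutPoint σ u p n + (substPow σ p [u n]).length := by
  rw [cutPoint, ← seg_append u n.zero_le n.le_succ, substPow_append, List.length_append,
    seg_singleton, cutPoint]

variable {σ : A → List A} {u : ℕ → A}

theorem cutPoint_zero (p : ℕ) : cutPoint σ u p 0 = 0 := by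
  simp [cutPoint, seg, substPow_nil]

theorem cutPoint_monotone (p : ℕ) : Monotone (cutPoint σ u p) :=
  monotone_nat_of_le_succ fun n => by rw [cutPoint_succ σ u]; omega

theorem cutPoint_strictMono (hσne : ∀ a, σ a ≠ []) (p : ℕ) : StrictMono (cutPoint σ u p) :=
  strictMono_nat_of_lt_succ fun n => by
    rw [cutPoint_succ σ u]
    have := List.length_pos_iff.mpr (substPow_ne_nil σ hσne p (u n))
    omega

theorem substPow_seg_zero (hfix : IsFixedPoint σ u) (p n : ℕ) :
    substPow σ p (seg u 0 n) = seg u 0 (cutPoint σ u p n) := by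
  induction p with
  | zero => simp [substPow, cutPoint, seg_length]
  | succ p ih =>
    rw [cutPoint, substPow_succ, ih]
    exact hfix _

theorem substPow_seg (hfix : IsFixedPoint σ u) (p : ℕ) {n m : ℕ} (h : n ≤ m) :
    substPow σ p (seg u n m) = seg u (cutPoint σ u p n) (cutPoint σ u p m) := by
  have hsplit := congrArg (substPow σ p) (seg_append u n.zero_le h)
  rw [substPow_append, substPow_seg_zero hfix, substPow_seg_zero hfix,
    ← seg_append u (Nat.zero_le _) (cutPoint_monotone p h)] at hsplit
  exact List.append_cancel_left hsplit

theorem exists_cutPoint_le_lt (hσne : ∀ a, σ a ≠ []) (p i : ℕ) :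
    ∃ t, cutPoint σ u p t ≤ i ∧ i < cutPoint σ u p (t + 1) := by
  classical
  have hex : ∃ n, i < cutPoint σ u p n :=
    ⟨i + 1, (cutPoint_strictMono hσne p).id_le (i + 1)⟩
  have hpos : Nat.find hex ≠ 0 := fun h0 => by
    have := Nat.find_spec hex
    rw [h0, cutPoint_zero] at this
    omega
  refine ⟨Nat.find hex - 1, not_lt.mp (Nat.find_min hex (by omega)), ?_⟩
  rw [Nat.sub_add_cancel (Nat.one_le_iff_ne_zero.mpr hpos)]
  exact Nat.find_spec hex

end CutPoints

section Lengths

variable {A : Type*} [Fintype A] [Nonempty A]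

theorem Ip_le (σ : A → List A) (p : ℕ) (a : A) : Ip σ p ≤ (substPow σ p [a]).length :=
  Finset.inf'_le _ (Finset.mem_univ a)

theorem le_Sp (σ : A → List A) (p : ℕ) (a : A) : (substPow σ p [a]).length ≤ Sp σ p :=
  Finset.le_sup' (fun a => (substPow σ p [a]).length) (Finset.mem_univ a)

theorem length_mul_Ip_le (σ : A → List A) (p : ℕ) (w : List A) :
    w.length * Ip σ p ≤ (substPow σ p w).length := by
  induction w with
  | nil => simp
  | cons a w ih =>
    rw [substPow_cons, List.length_append, List.length_cons, Nat.succ_mul, Nat.add_comm]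
    exact Nat.add_le_add (Ip_le σ p a) ih

theorem card_le_Ip_of_forall_mem {σ : A → List A} {k : ℕ}
    (hk : ∀ a b : A, a ∈ substPow σ k [b]) :
    Fintype.card A ≤ Ip σ k := by
  classical
  exact Finset.le_inf' _ _ fun b _ =>
    (Finset.card_le_card fun a _ => List.mem_toFinset.mpr (hk a b)).trans
      (List.toFinset_card_le _)

theorem exists_le_Ip {σ : A → List A} (h2 : 2 ≤ Fintype.card A) (hprim : IsPrimitiveSubst σ)
    (ℓ : ℕ) :
    ∃ p, ℓ ≤ Ip σ p := by
  obtain ⟨k, hk⟩ := hprim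
  have hgrowth : ∀ m (w : List A), 2 ^ m * w.length ≤ (substPow σ (m * k) w).length := by
    intro m
    induction m with
    | zero => simp [substPow]
    | succ m ih =>
      intro w
      calc 2 ^ (m + 1) * w.length ≤ (substPow σ (m * k) w).length * Ip σ k := by
            rw [pow_succ, mul_right_comm]
            exact Nat.mul_le_mul (ih w) (h2.trans (card_le_Ip_of_forall_mem hk))
        _ ≤ (substPow σ ((m + 1) * k) w).length := by
            rw [Nat.succ_mul, Nat.add_comm, substPow_add]
            exact length_mul_Ip_le σ k _
  refine ⟨ℓ * k, Finset.le_inf' _ _ fun a _ => ?_⟩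
  exact ℓ.lt_two_pow_self.le.trans (by simpa using hgrowth ℓ [a])

end Lengths

section Gaps

variable {A : Type*} {σ : A → List A} {u : ℕ → A}

theorem IsGap.mono {w : List A} {G G' : ℕ} (h : IsGap u w G) (hG : G ≤ G') : IsGap u w G' :=
  fun j => (h j).trans (seg_infix_seg u le_rfl (Nat.le_add_right j G) (by omega))

theorem IsGap.of_infix {w x : List A} {G : ℕ} (h : IsGap u x G) (hw : w <:+: x) : IsGap u w G :=
  fun j => hw.trans (h j)

variable [Fintype A] [Nonempty A]

theorem cutPoint_add_le (p n m : ℕ) :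
    cutPoint σ u p (n + m) ≤ cutPoint σ u p n + m * Sp σ p := by
  induction m with
  | zero => simp
  | succ m ih =>
    rw [← Nat.add_assoc, cutPoint_succ σ u, Nat.succ_mul]
    have := le_Sp σ p (u (n + m))
    omega

theorem exists_substPow_seg_infix (hσne : ∀ a, σ a ≠ []) (hfix : IsFixedPoint σ u)
    (p m j : ℕ) :
    ∃ s, substPow σ p (seg u s (s + m)) <:+: seg u j (j + (m + 1) * Sp σ p) := by
  obtain ⟨t, ht, hjt⟩ := exists_cutPoint_le_lt hσne p j (u := u)
  refine ⟨t + 1, ?_⟩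
  rw [substPow_seg hfix p (Nat.le_add_right _ _)]
  have hstep : cutPoint σ u p (t + 1) ≤ cutPoint σ u p t + 1 * Sp σ p := cutPoint_add_le p t 1
  have hblock : cutPoint σ u p (t + 1 + m) ≤ cutPoint σ u p (t + 1) + m * Sp σ p :=
    cutPoint_add_le p (t + 1) m
  exact seg_infix_seg u hjt.le (cutPoint_monotone p (Nat.le_add_right _ _))
    (by rw [Nat.succ_mul]; omega)

theorem IsGap.substPow (hσne : ∀ a, σ a ≠ []) (hfix : IsFixedPoint σ u) {x : List A}
    {G : ℕ} (h : IsGap u x G) (p : ℕ) : IsGap u (substPow σ p x) ((G + 1) * Sp σ p) := by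
  intro j
  obtain ⟨s, hs⟩ := exists_substPow_seg_infix hσne hfix p G j
  exact (substPow_infix σ p (h s)).trans hs

/-- Uniform recurrence: a factor of `u` lies in `σ^P(u₀)` for `P` large, hence in every
`σ^(P+k)(b)`, and such blocks occur in every window of length `2 S_(P+k)`. -/
theorem exists_isGap (h2 : 2 ≤ Fintype.card A) (hσne : ∀ a, σ a ≠ [])
    (hprim : IsPrimitiveSubst σ) (hfix : IsFixedPoint σ u) (i ℓ : ℕ) :
    ∃ G, IsGap u (seg u i (i + ℓ)) G := by
  obtain ⟨k, hk⟩ := id hprim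
  obtain ⟨P, hP⟩ := exists_le_Ip h2 hprim (i + ℓ)
  have hprefix : seg u i (i + ℓ) <:+: substPow σ P [u 0] := by
    have hlen := cutPoint_succ σ u P 0
    simp only [cutPoint_zero, Nat.zero_add] at hlen
    rw [← seg_singleton, substPow_seg hfix P (Nat.zero_le 1), cutPoint_zero]
    exact seg_infix_seg u (Nat.zero_le i) (Nat.le_add_right i ℓ)
      (hlen ▸ hP.trans (Ip_le σ P _))
  refine ⟨2 * Sp σ (P + k), fun j => ?_⟩
  obtain ⟨s, hs⟩ := exists_substPow_seg_infix hσne hfix (P + k) 1 j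
  rw [seg_singleton, substPow_add] at hs
  obtain ⟨l₁, l₂, hsplit⟩ := List.append_of_mem (hk (u 0) (u s))
  have hletter : [u 0] <:+: substPow σ k [u s] := ⟨l₁, l₂, by rw [hsplit]; simp⟩
  exact hprefix.trans ((substPow_infix σ P hletter).trans hs)

theorem isGap_gapConst (h2 : 2 ≤ Fintype.card A) (hσne : ∀ a, σ a ≠ [])
    (hprim : IsPrimitiveSubst σ) (hfix : IsFixedPoint σ u) {w : List A} (hw : w ∈ factors u 2) :
    IsGap u w (gapConst u) := by
  obtain ⟨i, rfl⟩ := hw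
  have hmin : IsGap u (seg u i (i + 2)) (minGap u (seg u i (i + 2))) :=
    Nat.sInf_mem (exists_isGap h2 hσne hprim hfix i 2)
  have hfin : (factors u 2).Finite :=
    (List.finite_length_eq A 2).subset fun x ⟨j, hj⟩ => by simp [hj, seg_length]
  refine hmin.mono (le_csSup ?_ ⟨_, ⟨i, rfl⟩, rfl⟩)
  simpa only [eq_comm, Set.image] using (hfin.image (minGap u)).bddAbove

/-- A factor no longer than the `σ^p`-images of letters lies in the `σ^p`-image of a factor
of length `2`. -/
theorem isGap_of_length_le_Ip (h2 : 2 ≤ Fintype.card A) (hσne : ∀ a, σ a ≠ [])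
    (hprim : IsPrimitiveSubst σ) (hfix : IsFixedPoint σ u) {p ℓ : ℕ} (hℓ : ℓ ≤ Ip σ p)
    {w : List A} (hw : w ∈ factors u ℓ) : IsGap u w ((gapConst u + 1) * Sp σ p) := by
  obtain ⟨i, rfl⟩ := hw
  obtain ⟨t, ht, hit⟩ := exists_cutPoint_le_lt hσne p i (u := u)
  have hnext : cutPoint σ u p (t + 2) =
      cutPoint σ u p (t + 1) + (substPow σ p [u (t + 1)]).length :=
    cutPoint_succ σ u p (t + 1)
  have hlong := Ip_le σ p (u (t + 1))
  have hinfix : seg u i (i + ℓ) <:+: substPow σ p (seg u t (t + 2)) := by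
    rw [substPow_seg hfix p (Nat.le_add_right t 2)]
    exact seg_infix_seg u ht (Nat.le_add_right i ℓ) (by omega)
  exact ((isGap_gapConst h2 hσne hprim hfix ⟨t, rfl⟩).substPow hσne hfix p).of_infix hinfix

end Gaps

section Weight

variable {A : Type*}

def wordWeight (β : A → ℝ) (w : List A) : ℝ := (w.map β).sum

theorem wordWeight_append (β : A → ℝ) (w z : List A) :
    wordWeight β (w ++ z) = wordWeight β w + wordWeight β z := by
  simp [wordWeight]

variable [Fintype A]

theorem wordWeight_eq_sum_count [DecidableEq A] (β : A → ℝ) (w : List A) :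
    wordWeight β w = ∑ b, (w.count b : ℝ) * β b := by
  rw [wordWeight, Finset.sum_list_map_count]
  simp_rw [nsmul_eq_mul]
  exact Finset.sum_subset (Finset.subset_univ _) fun b _ hb => by
    simp [List.count_eq_zero_of_not_mem (mt List.mem_toFinset.mpr hb)]

theorem wordWeight_letter [DecidableEq A] {σ : A → List A} {lam : ℝ} {β : A → ℝ}
    (heig : (incMatrixR σ).mulVec β = lam • β) (a : A) :
    wordWeight β (σ a) = lam * β a := by
  simpa [wordWeight_eq_sum_count, Matrix.mulVec, dotProduct, incMatrixR] using congrFun heig a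

theorem wordWeight_substWord [DecidableEq A] {σ : A → List A} {lam : ℝ} {β : A → ℝ}
    (heig : (incMatrixR σ).mulVec β = lam • β) (w : List A) :
    wordWeight β (substWord σ w) = lam * wordWeight β w := by
  induction w with
  | nil => simp [substWord, wordWeight]
  | cons a w ih =>
    rw [substWord, List.flatMap_cons, wordWeight_append, ← substWord, ih,
      wordWeight_letter heig, show a :: w = [a] ++ w from rfl, wordWeight_append]
    simp only [wordWeight, List.map_cons, List.map_nil, List.sum_cons, List.sum_nil, add_zero]
    ring

theorem wordWeight_substPow [DecidableEq A] {σ : A → List A} {lam : ℝ} {β : A → ℝ}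
    (heig : (incMatrixR σ).mulVec β = lam • β) (p : ℕ) (w : List A) :
    wordWeight β (substPow σ p w) = lam ^ p * wordWeight β w := by
  induction p with
  | zero => simp [substPow]
  | succ p ih => rw [substPow_succ, wordWeight_substWord heig, ih, pow_succ', mul_assoc]

variable [Nonempty A]

theorem length_mul_inf'_le_wordWeight (β : A → ℝ) (w : List A) :
    w.length * Finset.univ.inf' Finset.univ_nonempty β ≤ wordWeight β w := by
  simpa [wordWeight] using List.card_nsmul_le_sum (w.map β) _ fun x hx => by
    obtain ⟨a, -, rfl⟩ := List.mem_map.mp hx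
    exact Finset.inf'_le _ (Finset.mem_univ a)

theorem wordWeight_le_length_mul_sup' (β : A → ℝ) (w : List A) :
    wordWeight β w ≤ w.length * Finset.univ.sup' Finset.univ_nonempty β := by
  simpa [wordWeight] using List.sum_le_card_nsmul (w.map β) _ fun x hx => by
    obtain ⟨a, -, rfl⟩ := List.mem_map.mp hx
    exact Finset.le_sup' _ (Finset.mem_univ a)

theorem sup'_le_Cst_mul_inf' {β : A → ℝ} (hβ : ∀ a, 0 < β a) :
    Finset.univ.sup' Finset.univ_nonempty β ≤
      Cst β * Finset.univ.inf' Finset.univ_nonempty β := by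
  obtain ⟨a, -, ha⟩ := Finset.exists_mem_eq_inf' Finset.univ_nonempty β
  have hpos : 0 < Finset.univ.inf' Finset.univ_nonempty β := ha ▸ hβ a
  exact (div_le_iff₀ hpos).mp (Nat.le_ceil _)

variable [DecidableEq A] {σ : A → List A} {lam : ℝ} {β : A → ℝ}

theorem lam_nonneg (hβ : ∀ a, 0 < β a) (heig : (incMatrixR σ).mulVec β = lam • β) :
    0 ≤ lam := by
  obtain ⟨a⟩ := ‹Nonempty A›
  have hnonneg : 0 ≤ wordWeight β (σ a) :=
    List.sum_nonneg fun x hx => by obtain ⟨b, -, rfl⟩ := List.mem_map.mp hx; exact (hβ b).le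
  rw [wordWeight_letter heig] at hnonneg
  exact nonneg_of_mul_nonneg_left hnonneg (hβ a)

/-- Comparing `β`-weights, which grow exactly by the factor `λ`, with lengths costs a factor
`C` on each side. -/
theorem Sp_succ_le (hβ : ∀ a, 0 < β a) (heig : (incMatrixR σ).mulVec β = lam • β)
    (p : ℕ) :
    (Sp σ (p + 1) : ℝ) ≤ lam * Cst β ^ 2 * Ip σ p := by
  set mn := Finset.univ.inf' Finset.univ_nonempty β
  set mx := Finset.univ.sup' Finset.univ_nonempty β
  have hC := sup'_le_Cst_mul_inf' hβ
  have hlam := lam_nonneg hβ heig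
  obtain ⟨a, -, ha⟩ := Finset.exists_mem_eq_sup' Finset.univ_nonempty
    fun a => (substPow σ (p + 1) [a]).length
  obtain ⟨b, -, hb⟩ := Finset.exists_mem_eq_inf' Finset.univ_nonempty
    fun a => (substPow σ p [a]).length
  have hmn : 0 < mn := (Finset.lt_inf'_iff _).mpr fun a _ => hβ a
  have hmx : 0 ≤ mx := (hβ a).le.trans (Finset.le_sup' β (Finset.mem_univ a))
  have hupper : (Sp σ (p + 1) : ℝ) * mn ≤ lam ^ (p + 1) * mx := by
    have := length_mul_inf'_le_wordWeight β (substPow σ (p + 1) [a])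
    rw [wordWeight_substPow heig] at this
    calc (Sp σ (p + 1) : ℝ) * mn ≤ lam ^ (p + 1) * wordWeight β [a] := by
          rw [Sp, ha]; exact this
      _ ≤ lam ^ (p + 1) * mx := by
          gcongr
          simpa [wordWeight] using Finset.le_sup' β (Finset.mem_univ a)
  have hlower : lam ^ p ≤ Ip σ p * Cst β := by
    have := wordWeight_le_length_mul_sup' β (substPow σ p [b])
    rw [wordWeight_substPow heig] at this
    refine le_of_mul_le_mul_right ?_ hmn
    calc lam ^ p * mn ≤ lam ^ p * wordWeight β [b] := by
          gcongr
          simpa [wordWeight] using Finset.inf'_le β (Finset.mem_univ b)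
      _ ≤ Ip σ p * mx := by rw [Ip, hb]; exact this
      _ ≤ Ip σ p * Cst β * mn := by rw [mul_assoc]; gcongr
  refine le_of_mul_le_mul_right ?_ hmn
  calc (Sp σ (p + 1) : ℝ) * mn ≤ lam * lam ^ p * mx := by rwa [← pow_succ']
    _ ≤ lam * (Ip σ p * Cst β) * (Cst β * mn) := by gcongr
    _ = lam * Cst β ^ 2 * Ip σ p * mn := by ring

end Weight

section PowerFree

variable {A : Type*} [Fintype A] [Nonempty A] [DecidableEq A] {σ : A → List A} {u : ℕ → A}
  {lam : ℝ} {β : A → ℝ}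

theorem le_Kst (hβ : ∀ a, 0 < β a) (heig : (incMatrixR σ).mulVec β = lam • β) :
    lam * Cst β ^ 2 * (2 * (gapConst u + 1)) ≤ Kst u lam β := by
  have : 0 ≤ lam * Cst β ^ 2 := mul_nonneg (lam_nonneg hβ heig) (by positivity)
  exact (mul_le_mul_of_nonneg_left (le_max_left _ _) this).trans (Nat.le_ceil _)

/-- For the least `p` with `2q ≤ I_p` we have `I_(p-1) < 2q`, so `S_p ≤ λ C² I_(p-1)` is at
most `2 λ C² q`. -/
theorem exists_two_mul_le_Ip_and_Sp_le (h2 : 2 ≤ Fintype.card A) (hprim : IsPrimitiveSubst σ)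
    (hβ : ∀ a, 0 < β a) (heig : (incMatrixR σ).mulVec β = lam • β) {q : ℕ} (hq : 0 < q) :
    ∃ p, 2 * q ≤ Ip σ p ∧ (gapConst u + 1) * Sp σ p ≤ Kst u lam β * q := by
  classical
  have hex := exists_le_Ip h2 hprim (2 * q)
  obtain ⟨p, hp⟩ : ∃ p, Nat.find hex = p + 1 := Nat.exists_eq_succ_of_ne_zero fun h0 => by
    have h := (h0 ▸ Nat.find_spec hex).trans (Ip_le σ 0 (Classical.arbitrary A))
    simp [substPow] at h
    omega
  refine ⟨p + 1, hp ▸ Nat.find_spec hex, ?_⟩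
  have hIp : (Ip σ p : ℝ) ≤ 2 * q := by
    exact_mod_cast (not_le.mp (Nat.find_min hex (by omega))).le
  have hlam := lam_nonneg hβ heig
  have hreal : ((gapConst u + 1) * Sp σ (p + 1) : ℝ) ≤ Kst u lam β * q :=
    calc ((gapConst u + 1) * Sp σ (p + 1) : ℝ)
        ≤ (gapConst u + 1) * (lam * Cst β ^ 2 * Ip σ p) := by
          gcongr; exact Sp_succ_le hβ heig p
      _ ≤ (gapConst u + 1) * (lam * Cst β ^ 2 * (2 * q)) := by gcongr
      _ = lam * Cst β ^ 2 * (2 * (gapConst u + 1)) * q := by ring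
      _ ≤ Kst u lam β * q := by gcongr; exact le_Kst hβ heig
  exact_mod_cast hreal

theorem isGap_Kst_mul (h2 : 2 ≤ Fintype.card A) (hσne : ∀ a, σ a ≠ [])
    (hprim : IsPrimitiveSubst σ) (hfix : IsFixedPoint σ u) (hβ : ∀ a, 0 < β a)
    (heig : (incMatrixR σ).mulVec β = lam • β) {q : ℕ} (hq : 0 < q) {w : List A}
    (hw : w ∈ factors u (2 * q)) : IsGap u w (Kst u lam β * q) := by
  obtain ⟨p, hIp, hSp⟩ := exists_two_mul_le_Ip_and_Sp_le (u := u) h2 hprim hβ heig hq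
  exact (isGap_of_length_le_Ip h2 hσne hprim hfix hIp hw).mono hSp

end PowerFree

/-- `K`-power freeness of the fixed point: if `vᴺ ∈ L(u)` for some `N ≥ K`, where
`K = ⌈λ C² max{2(g+1), (#A)²}⌉`, then `v` is the empty word. -/
theorem stmt_6 (A : Type*) [Fintype A] [DecidableEq A] [Nonempty A]
    (h2 : 2 ≤ Fintype.card A)
    (σ : A → List A) (hσne : ∀ a, σ a ≠ [])
    (hprim : IsPrimitiveSubst σ)
    (u : ℕ → A) (hfix : IsFixedPoint σ u) (hap : AperiodicSeq u)
    (lam : ℝ) (β : A → ℝ) (hβ : ∀ a, 0 < β a)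
    (heig : (incMatrixR σ).mulVec β = lam • β) :
    ∀ (v : List A) (N : ℕ), Kst u lam β ≤ N → wpow v N ∈ lang u → v = [] := by
  rintro v N hKN ⟨i, m, hocc⟩
  by_contra hv
  have hq : 0 < v.length := List.length_pos_iff.mpr hv
  have hm : m = N * v.length := by
    simpa [seg_length, length_wpow] using (congrArg List.length hocc).symm
  refine hap v.length hq (funext fun j => seg_add_length_eq_of_infix_wpow u j (N := N) ?_)
  rw [hocc, hm]
  exact (isGap_Kst_mul h2 hσne hprim hfix hβ heig hq ⟨j, rfl⟩).mono
    (Nat.mul_le_mul_right _ hKN) i
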